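/- Fix α ∈ ℂ. Let E = ℂ² with basis e₁, e₂, equipped with the dendriform algebra structure Dend₂²(α) given by the bilinear operations ≺, ≻ determined on basis elements by e₁ ≺ e₁ = e₂ and e₁ ≻ e₁ = α·e₂ (all other products of basis elements are 0). A linear operator P : E → E is a Nijenhuis operator on (E, ≺, ≻) if and only if there exist b, d ∈ ℂ such that P(e₁) = d·e₁ + b·e₂ and P(e₂) = d·e₂. -/

import Mathlib

/-!
Both products have the form `u ⬝ v = u₁ v₁ • w` with `w ∈ ℂ e₂`. For such a product the Nijenhuis
identity at `(e₁, e₂)` forces the `e₁`-coordinate `s` of `P e₂` to satisfy `s² = 0`, and then at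
`(e₁, e₁)` it forces `(p - t)² = 0`, where `p`, `t` are the diagonal entries of `P`. Conversely, if
`u ↦ u₁` and `w` are both eigenvectors of `P` for the same eigenvalue `d`, both sides of the identity
equal `d² u₁ v₁ • w`.
-/

variable {R M : Type*} [CommRing R] [AddCommGroup M] [Module R M]

def IsNijenhuis (μ : M →ₗ[R] M →ₗ[R] M) (P : M →ₗ[R] M) : Prop :=
  ∀ u v, μ (P u) (P v) = P (μ (P u) v + μ u (P v) - P (μ u v))

theorem LinearMap.apply_eq_fst_smul_add_snd_smul (f : R × R →ₗ[R] M) (u : R × R) :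
    f u = u.1 • f (1, 0) + u.2 • f (0, 1) := by
  rw [← map_smul, ← map_smul, ← map_add]
  simp

theorem LinearMap.apply_apply_eq_fst_mul_fst_smul (B : R × R →ₗ[R] R × R →ₗ[R] M)
    (h₁₂ : B (1, 0) (0, 1) = 0) (h₂₁ : B (0, 1) (1, 0) = 0) (h₂₂ : B (0, 1) (0, 1) = 0)
    (u v : R × R) : B u v = (u.1 * v.1) • B (1, 0) (1, 0) := by
  rw [B.apply_eq_fst_smul_add_snd_smul u, LinearMap.add_apply, LinearMap.smul_apply,
    LinearMap.smul_apply, (B (1, 0)).apply_eq_fst_smul_add_snd_smul v,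
    (B (0, 1)).apply_eq_fst_smul_add_snd_smul v, h₁₂, h₂₁, h₂₂]
  simp only [smul_zero, add_zero, smul_smul]

theorem isNijenhuis_of_apply_eq_mul_smul {μ : M →ₗ[R] M →ₗ[R] M} {P : M →ₗ[R] M}
    {φ : M →ₗ[R] R} {w : M} {d : R} (hμ : ∀ u v, μ u v = (φ u * φ v) • w)
    (hφ : ∀ u, φ (P u) = d * φ u) (hw : P w = d • w) : IsNijenhuis μ P := by
  intro u v
  have hrhs : μ (P u) v + μ u (P v) - P (μ u v) = (d * φ u * φ v) • w := by
    simp only [hμ, hφ, map_smul, hw, smul_smul, ← add_smul, ← sub_smul]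
    congr 1
    ring
  rw [hrhs, hμ, hφ, hφ, map_smul, hw, smul_smul]
  congr 1
  ring

theorem isNijenhuis_of_triangular {μ : R × R →ₗ[R] R × R →ₗ[R] R × R} {P : R × R →ₗ[R] R × R}
    {w : R × R} {b d : R} (hμ : ∀ u v, μ u v = (u.1 * v.1) • w) (hw : w.1 = 0)
    (hP₁ : P (1, 0) = d • (1, 0) + b • (0, 1)) (hP₂ : P (0, 1) = d • (0, 1)) :
    IsNijenhuis μ P := by
  have hPu (u : R × R) : P u = (d * u.1, b * u.1 + d * u.2) := by
    rw [P.apply_eq_fst_smul_add_snd_smul, hP₁, hP₂]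
    ext <;> simp <;> ring
  refine isNijenhuis_of_apply_eq_mul_smul (φ := LinearMap.fst R R R) (d := d) hμ
    (fun u => by simp [hPu]) ?_
  rw [hPu]
  ext <;> simp [hw]

theorem IsNijenhuis.apply_zero_one [NoZeroDivisors R] {μ : R × R →ₗ[R] R × R →ₗ[R] R × R}
    {P : R × R →ₗ[R] R × R} (hμ : ∀ u v, μ u v = (u.1 * v.1) • (0, 1)) (hP : IsNijenhuis μ P) :
    P (0, 1) = (P (1, 0)).1 • (0, 1) := by
  rcases h₁ : P (1, 0) with ⟨p, q⟩
  rcases h₂ : P (0, 1) with ⟨s, t⟩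
  have hPu (u : R × R) : P u = u.1 • (p, q) + u.2 • (s, t) := by
    rw [P.apply_eq_fst_smul_add_snd_smul, h₁, h₂]
  have hs : s = 0 := by simpa [hμ, hPu] using congrArg Prod.fst (hP (1, 0) (0, 1))
  have hpt : p = t := by
    have h : p * p = (p + p - t) * t := by
      simpa [hμ, hPu, hs] using congrArg Prod.snd (hP (1, 0) (1, 0))
    exact sub_eq_zero.mp (mul_self_eq_zero.mp (by linear_combination h))
  simp [hs, hpt]

theorem stmt_15
    (α : ℂ)
    (l r : (ℂ × ℂ) →ₗ[ℂ] (ℂ × ℂ) →ₗ[ℂ] (ℂ × ℂ))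
    (P : (ℂ × ℂ) →ₗ[ℂ] (ℂ × ℂ))
    (e₁ e₂ : ℂ × ℂ)
    (he₁ : e₁ = (1, 0)) (he₂ : e₂ = (0, 1))
    (hl11 : l e₁ e₁ = e₂)
    (hl12 : l e₁ e₂ = 0)
    (hl21 : l e₂ e₁ = 0)
    (hl22 : l e₂ e₂ = 0)
    (hr11 : r e₁ e₁ = α • e₂)
    (hr12 : r e₁ e₂ = 0)
    (hr21 : r e₂ e₁ = 0)
    (hr22 : r e₂ e₂ = 0) :
    (∀ u v : ℂ × ℂ,
        l (P u) (P v) = P (l (P u) v + l u (P v) - P (l u v)) ∧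
        r (P u) (P v) = P (r (P u) v + r u (P v) - P (r u v))) ↔
      (∃ b d : ℂ, P e₁ = d • e₁ + b • e₂ ∧ P e₂ = d • e₂) := by
  subst he₁ he₂
  have hl (u v : ℂ × ℂ) : l u v = (u.1 * v.1) • (0, 1) := by
    rw [l.apply_apply_eq_fst_mul_fst_smul hl12 hl21 hl22, hl11]
  have hr (u v : ℂ × ℂ) : r u v = (u.1 * v.1) • α • (0, 1) := by
    rw [r.apply_apply_eq_fst_mul_fst_smul hr12 hr21 hr22, hr11]
  constructor
  · intro h
    refine ⟨(P (1, 0)).2, (P (1, 0)).1, by ext <;> simp, ?_⟩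
    exact IsNijenhuis.apply_zero_one hl fun u v => (h u v).1
  · rintro ⟨b, d, h₁, h₂⟩ u v
    exact ⟨isNijenhuis_of_triangular hl rfl h₁ h₂ u v,
      isNijenhuis_of_triangular hr (by simp) h₁ h₂ u v⟩
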